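/- Let k > 0 be real and t ∈ ℝ. Then the complex number (−i·k − t)/(−i·k + t) has modulus exactly 1. -/

import Mathlib

/-! A purely imaginary `a` satisfies `a - t = -conj (a + t)` for real `t`, so numerator and
denominator have the same modulus; the denominator vanishes nowhere since its imaginary part
is `-k ≠ 0`. -/

namespace Complex

lemma sub_ofReal_eq_neg_conj_add_ofReal {a : ℂ} (ha : a.re = 0) (t : ℝ) :
    a - t = -(starRingEnd ℂ) (a + t) := by
  apply Complex.ext <;> simp [ha]

lemma norm_sub_ofReal_eq_norm_add_ofReal {a : ℂ} (ha : a.re = 0) (t : ℝ) :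
    ‖a - t‖ = ‖a + t‖ := by
  rw [sub_ofReal_eq_neg_conj_add_ofReal ha, norm_neg, Complex.norm_conj]

lemma norm_sub_ofReal_div_add_ofReal {a : ℂ} (ha : a.re = 0) (ha' : a ≠ 0) (t : ℝ) :
    ‖(a - t) / (a + t)‖ = 1 := by
  have him : a.im ≠ 0 := fun h => ha' (Complex.ext ha h)
  have hden : a + t ≠ 0 := fun h => him (by simpa using congrArg Complex.im h)
  rw [norm_div, norm_sub_ofReal_eq_norm_add_ofReal ha, div_self (norm_ne_zero_iff.mpr hden)]

end Complex

theorem stmt_9 (k : ℝ) (hk : 0 < k) (t : ℝ) :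
    ‖(-Complex.I * k - t) / (-Complex.I * k + t)‖ = 1 :=
  Complex.norm_sub_ofReal_div_add_ofReal (by simp) (by simp [hk.ne']) t
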